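/- arXiv:math/0302355 — 2 statements merged into one kernel-verified Lean document; each statement's English description precedes it below -/
import Mathlib

section
/- There exists a constant D6 > 0 depending only on m with the following property: for every function v : ℝ^m → ℝ that is continuously differentiable on B3, with ‖Dv‖_{L^{2m}(B3)} and ‖v‖_{L²(B3)} finite, and for every x ∈ B2, one has |v(x)| ≤ D6 · ( ‖Dv‖_{L^{2m}(B3)} + ‖v‖_{L²(B3)} ). -/
open MeasureTheory Metric

lemma holder_aux {α : Type*} [MeasurableSpace α] (μ : Measure α) [IsFiniteMeasure μ] {f : α → ℝ}
    (hf : AEStronglyMeasurable f μ) (hnn : ∀ z, 0 ≤ f z) {p : ℝ} (hp : 1 < p)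
    (hint : Integrable (fun z => f z ^ p) μ) :
    ∫ z, f z ∂μ ≤ (∫ z, f z ^ p ∂μ) ^ (1/p) * (μ Set.univ).toReal ^ (1 - 1/p) := by
  have hp0 : 0 < p := lt_trans one_pos hp
  have hpq : p.HolderConjugate (p/(p-1)) := Real.HolderConjugate.conjExponent hp
  have hfm : MemLp f (ENNReal.ofReal p) μ := by
    rw [← memLp_norm_rpow_iff (p := ENNReal.ofReal p) (q := ENNReal.ofReal p) hf
      (by simp [hp0.ne', hp0]) (by simp)]
    rw [ENNReal.div_self (by simp [hp0.ne', hp0]) (by simp), ENNReal.toReal_ofReal hp0.le]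
    rw [memLp_one_iff_integrable]
    apply hint.congr
    filter_upwards with z
    rw [Real.norm_of_nonneg (hnn z)]
  have hgm : MemLp (fun _ : α => (1:ℝ)) (ENNReal.ofReal (p/(p-1))) μ := memLp_const 1
  have H := integral_mul_le_Lp_mul_Lq_of_nonneg hpq
    (Filter.Eventually.of_forall hnn) (Filter.Eventually.of_forall fun _ => zero_le_one)
    hfm hgm
  simp only [mul_one, Real.one_rpow, integral_const, smul_eq_mul] at H
  have h1q : 1 / (p/(p-1)) = 1 - 1/p := by
    field_simp
  calc ∫ z, f z ∂μ ≤ (∫ z, f z ^ p ∂μ) ^ (1/p) * (μ Set.univ).toReal ^ (1/(p/(p-1))) := H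
    _ = (∫ z, f z ^ p ∂μ) ^ (1/p) * (μ Set.univ).toReal ^ (1 - 1/p) := by rw [h1q]

lemma scaling_aux {m : ℕ} (f : EuclideanSpace ℝ (Fin m) → ℝ)
    (x : EuclideanSpace ℝ (Fin m)) {t : ℝ} (ht : 0 < t) :
    ∫ y in ball x 1, f (x + t • (y - x)) = (t ^ m)⁻¹ * ∫ z in ball x t, f z := by
  have hemb : MeasurableEmbedding (fun u : EuclideanSpace ℝ (Fin m) => u + x) :=
    (MeasurableEquiv.addRight x).measurableEmbedding
  have hmp : MeasurePreserving (fun u : EuclideanSpace ℝ (Fin m) => u + x) volume volume :=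
    measurePreserving_add_right volume x
  have step1 : ∫ y in ball x 1, f (x + t • (y - x)) =
      ∫ u in ball (0 : EuclideanSpace ℝ (Fin m)) 1, f (x + t • u) := by
    rw [← hmp.setIntegral_preimage_emb hemb (fun y => f (x + t • (y - x))) (ball x 1)]
    have : (fun u : EuclideanSpace ℝ (Fin m) => u + x) ⁻¹' ball x 1 = ball 0 1 := by
      ext u; simp [mem_ball, dist_eq_norm]
    rw [this]
    simp
  have step4 : ∫ w in ball (0 : EuclideanSpace ℝ (Fin m)) t, f (x + w) =
      ∫ z in ball x t, f z := by
    rw [← hmp.setIntegral_preimage_emb hemb f (ball x t)]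
    have : (fun u : EuclideanSpace ℝ (Fin m) => u + x) ⁻¹' ball x t = ball 0 t := by
      ext u; simp [mem_ball, dist_eq_norm]
    rw [this]
    congr 1; ext w; rw [add_comm]
  set K : EuclideanSpace ℝ (Fin m) → ℝ :=
    Set.indicator (ball (0 : EuclideanSpace ℝ (Fin m)) t) (fun w => f (x + w)) with hK
  have step2 : ∫ u in ball (0 : EuclideanSpace ℝ (Fin m)) 1, f (x + t • u) =
      ∫ u, K (t • u) := by
    rw [← integral_indicator measurableSet_ball]
    congr 1; ext u
    by_cases hu : u ∈ ball (0 : EuclideanSpace ℝ (Fin m)) 1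
    · rw [Set.indicator_of_mem hu, hK, Set.indicator_of_mem]
      rw [mem_ball_zero_iff] at hu ⊢
      rw [norm_smul, Real.norm_of_nonneg ht.le]
      nlinarith
    · rw [Set.indicator_of_notMem hu, hK, Set.indicator_of_notMem]
      rw [mem_ball_zero_iff] at hu ⊢
      rw [norm_smul, Real.norm_of_nonneg ht.le]
      intro h
      exact hu (by nlinarith [norm_nonneg u])
  have step3 : ∫ u, K (t • u) = (t ^ m)⁻¹ * ∫ w, K w := by
    rw [Measure.integral_comp_smul volume K t]
    rw [finrank_euclideanSpace_fin]
    rw [abs_of_nonneg (by positivity), smul_eq_mul]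
  rw [step1, step2, step3, hK, integral_indicator measurableSet_ball, step4]

lemma ftc_aux {m : ℕ} (v : EuclideanSpace ℝ (Fin m) → ℝ)
    (hv : ContDiffOn ℝ 1 v (ball (0 : EuclideanSpace ℝ (Fin m)) 3))
    {x : EuclideanSpace ℝ (Fin m)} (hx : x ∈ ball (0 : EuclideanSpace ℝ (Fin m)) 2)
    {y : EuclideanSpace ℝ (Fin m)} (hy : y ∈ ball x 1) :
    |v x| ≤ |v y| + ∫ t in (0:ℝ)..1, ‖fderiv ℝ v (x + t • (y - x))‖ := by
  have hball : ball x 1 ⊆ ball (0 : EuclideanSpace ℝ (Fin m)) 3 := by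
    intro z hz
    rw [mem_ball] at hz hx ⊢
    have := dist_triangle z x 0
    linarith
  set γ : ℝ → EuclideanSpace ℝ (Fin m) := fun t => x + t • (y - x) with hγdef
  have hγmem : ∀ t ∈ Set.uIcc (0:ℝ) 1, γ t ∈ ball (0 : EuclideanSpace ℝ (Fin m)) 3 := by
    intro t ht
    apply hball
    rw [mem_ball, dist_eq_norm, hγdef]
    simp only [add_sub_cancel_left, norm_smul]
    rw [Set.uIcc_of_le zero_le_one] at ht
    have h1 : |t| ≤ 1 := abs_le.2 ⟨by linarith [ht.1], ht.2⟩
    have h2 : ‖y - x‖ < 1 := by rw [mem_ball, dist_eq_norm] at hy; exact hy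
    calc |t| * ‖y - x‖ ≤ 1 * ‖y - x‖ := by
          apply mul_le_mul_of_nonneg_right h1 (norm_nonneg _)
      _ < 1 := by linarith
  have hderiv : ∀ t ∈ Set.uIcc (0:ℝ) 1,
      HasDerivAt (fun s => v (γ s)) ((fderiv ℝ v (γ t)) (y - x)) t := by
    intro t ht
    have hvd : DifferentiableAt ℝ v (γ t) :=
      (hv.differentiableOn one_ne_zero).differentiableAt (isOpen_ball.mem_nhds (hγmem t ht))
    have hγd : HasDerivAt γ (y - x) t := by
      have : HasDerivAt (fun s : ℝ => s • (y - x)) ((1:ℝ) • (y - x)) t :=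
        (hasDerivAt_id t).smul_const (y - x)
      simpa only [one_smul] using this.const_add x
    exact hvd.hasFDerivAt.comp_hasDerivAt t hγd
  have hcont : ContinuousOn (fun t => fderiv ℝ v (γ t)) (Set.uIcc (0:ℝ) 1) := by
    apply (hv.continuousOn_fderiv_of_isOpen isOpen_ball le_rfl).comp
    · exact (continuous_const.add (continuous_id.smul continuous_const)).continuousOn
    · exact hγmem
  have hcont2 : ContinuousOn (fun t => (fderiv ℝ v (γ t)) (y - x)) (Set.uIcc (0:ℝ) 1) :=
    hcont.clm_apply continuousOn_const
  have hii : IntervalIntegrable (fun t => (fderiv ℝ v (γ t)) (y - x)) volume 0 1 :=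
    hcont2.intervalIntegrable
  have hftc : ∫ t in (0:ℝ)..1, (fderiv ℝ v (γ t)) (y - x) = v (γ 1) - v (γ 0) :=
    intervalIntegral.integral_eq_sub_of_hasDerivAt hderiv hii
  have hγ0 : γ 0 = x := by simp [hγdef]
  have hγ1 : γ 1 = y := by simp [hγdef]
  rw [hγ0, hγ1] at hftc
  have key : |v x| ≤ |v y| + |∫ t in (0:ℝ)..1, (fderiv ℝ v (γ t)) (y - x)| := by
    rw [hftc]
    have h1 := abs_sub_abs_le_abs_sub (v x) (v y)
    rw [abs_sub_comm] at h1
    linarith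
  refine key.trans (add_le_add le_rfl ?_)
  rw [← Real.norm_eq_abs]
  calc ‖∫ t in (0:ℝ)..1, (fderiv ℝ v (γ t)) (y - x)‖
      ≤ ∫ t in (0:ℝ)..1, ‖(fderiv ℝ v (γ t)) (y - x)‖ :=
        intervalIntegral.norm_integral_le_integral_norm zero_le_one
    _ ≤ ∫ t in (0:ℝ)..1, ‖fderiv ℝ v (γ t)‖ := by
        apply intervalIntegral.integral_mono_on zero_le_one hii.norm
          (hcont.norm.intervalIntegrable)
        intro t ht
        have h2 : ‖y - x‖ ≤ 1 := by
          rw [mem_ball, dist_eq_norm] at hy; linarith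
        calc ‖(fderiv ℝ v (γ t)) (y - x)‖ ≤ ‖fderiv ℝ v (γ t)‖ * ‖y - x‖ :=
              (fderiv ℝ v (γ t)).le_opNorm (y - x)
          _ ≤ ‖fderiv ℝ v (γ t)‖ := mul_le_of_le_one_right (norm_nonneg _) h2

set_option maxHeartbeats 1000000

/-- Lemma 5.3, second part: there is `D6 > 0` depending only on `m` such that for every
`v : ℝ^m → ℝ` continuously differentiable on the ball `B₃`, with `‖Dv‖_{L^{2m}(B₃)}` and
`‖v‖_{L²(B₃)}` finite, and every `x ∈ B₂`, one has
`|v x| ≤ D6 * (‖Dv‖_{L^{2m}(B₃)} + ‖v‖_{L²(B₃)})`. -/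
theorem sobolev_sup_bound_L2m
    (m : ℕ) (hm : 3 ≤ m) :
    ∃ D6 : ℝ, 0 < D6 ∧
      ∀ v : EuclideanSpace ℝ (Fin m) → ℝ,
        ContDiffOn ℝ 1 v (ball (0 : EuclideanSpace ℝ (Fin m)) 3) →
        IntegrableOn (fun y => ‖fderiv ℝ v y‖ ^ (2 * m))
          (ball (0 : EuclideanSpace ℝ (Fin m)) 3) →
        IntegrableOn (fun y => |v y| ^ 2)
          (ball (0 : EuclideanSpace ℝ (Fin m)) 3) →
        ∀ x ∈ ball (0 : EuclideanSpace ℝ (Fin m)) 2,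
          |v x| ≤ D6 *
            ((∫ y in ball (0 : EuclideanSpace ℝ (Fin m)) 3,
                ‖fderiv ℝ v y‖ ^ (2 * m)) ^ ((1 : ℝ) / (2 * m))
              + (∫ y in ball (0 : EuclideanSpace ℝ (Fin m)) 3, |v y| ^ 2) ^ ((1 : ℝ) / 2)) := by
  classical
  set E := EuclideanSpace ℝ (Fin m)
  have hm0 : 0 < m := by omega
  set c : ℝ := (volume (ball (0 : E) 1)).toReal with hc_def
  have hc : 0 < c := by
    rw [hc_def]
    apply ENNReal.toReal_pos
    · exact (Metric.measure_ball_pos volume 0 one_pos).ne'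
    · exact measure_ball_lt_top.ne
  set θ : ℝ := 1 - 1/(2*(m:ℝ)) with hθ_def
  have h2m1 : (1:ℝ) < 2 * (m:ℝ) := by
    have : (1:ℝ) ≤ (m:ℝ) := by exact_mod_cast hm0
    linarith
  refine ⟨(c ^ ((1:ℝ)/2) + 2 * c ^ θ) / c, by positivity, ?_⟩
  haveI : Nontrivial (EuclideanSpace ℝ (Fin m)) :=
    Module.nontrivial_of_finrank_pos (R := ℝ) (by rw [finrank_euclideanSpace_fin]; exact hm0)
  intro v hv hDv hv2 x hx
  -- basic geometry
  have hxn : ‖x‖ < 2 := by rwa [mem_ball, dist_zero_right] at hx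
  have hcb : closedBall x 1 ⊆ ball (0 : E) 3 := by
    intro z hz
    rw [mem_closedBall, dist_eq_norm] at hz
    rw [mem_ball, dist_zero_right]
    calc ‖z‖ = ‖z - x + x‖ := by rw [sub_add_cancel]
      _ ≤ ‖z - x‖ + ‖x‖ := norm_add_le _ _
      _ < 3 := by linarith
  have hB1 : ball x 1 ⊆ ball (0 : E) 3 := ball_subset_closedBall.trans hcb
  -- continuity facts
  have hfc : ContinuousOn (fun z => ‖fderiv ℝ v z‖) (ball (0 : E) 3) :=
    (hv.continuousOn_fderiv_of_isOpen isOpen_ball le_rfl).norm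
  have hvc : ContinuousOn v (ball (0 : E) 3) := hv.continuousOn
  -- the kernel G on the product space
  set G : ℝ × E → ℝ := fun p => ‖fderiv ℝ v (x + p.1 • (p.2 - x))‖ with hG_def
  set ν : Measure ℝ := volume.restrict (Set.Ioc (0:ℝ) 1) with hν_def
  set μB : Measure E := volume.restrict (ball x 1) with hμB_def
  haveI : IsFiniteMeasure ν := by
    constructor; rw [hν_def, Measure.restrict_apply_univ]
    exact (measure_Ioc_lt_top)
  haveI : IsFiniteMeasure μB := by
    constructor; rw [hμB_def, Measure.restrict_apply_univ]
    exact measure_ball_lt_top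
  have hmaps : ∀ p : ℝ × E, p ∈ Set.Ioc (0:ℝ) 1 ×ˢ ball x 1 →
      x + p.1 • (p.2 - x) ∈ ball (0:E) 3 := by
    rintro ⟨t, y⟩ ⟨ht, hy⟩
    apply hB1
    rw [mem_ball, dist_eq_norm, add_sub_cancel_left, norm_smul, Real.norm_of_nonneg ht.1.le]
    rw [mem_ball, dist_eq_norm] at hy
    calc t * ‖y - x‖ ≤ 1 * ‖y - x‖ := by
          apply mul_le_mul_of_nonneg_right ht.2 (norm_nonneg _)
      _ < 1 := by linarith
  have hGcont : ContinuousOn G (Set.Ioc (0:ℝ) 1 ×ˢ ball x 1) := by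
    apply hfc.comp
    · apply Continuous.continuousOn
      exact continuous_const.add ((continuous_fst.smul (continuous_snd.sub continuous_const)))
    · exact hmaps
  have hGmeas : AEStronglyMeasurable G (ν.prod μB) := by
    rw [hν_def, hμB_def, Measure.prod_restrict]
    exact hGcont.aestronglyMeasurable (measurableSet_Ioc.prod measurableSet_ball)
  obtain ⟨M, hM⟩ : ∃ M, ∀ z ∈ closedBall x 1, ‖fderiv ℝ v z‖ ≤ M := by
    obtain ⟨M, hM⟩ := (isCompact_closedBall x 1).exists_bound_of_continuousOn
      ((hv.continuousOn_fderiv_of_isOpen isOpen_ball le_rfl).mono hcb)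
    exact ⟨M, fun z hz => by simpa using hM z hz⟩
  have hGint : Integrable G (ν.prod μB) := by
    apply Integrable.mono' (integrable_const M) hGmeas
    rw [hν_def, hμB_def, Measure.prod_restrict]
    filter_upwards [ae_restrict_mem (measurableSet_Ioc.prod measurableSet_ball)]
    rintro ⟨t, y⟩ ⟨ht, hy⟩
    rw [Real.norm_of_nonneg (norm_nonneg _)]
    apply hM
    rw [mem_closedBall, dist_eq_norm, add_sub_cancel_left, norm_smul,
      Real.norm_of_nonneg ht.1.le]
    rw [mem_ball, dist_eq_norm] at hy
    nlinarith [norm_nonneg (y - x), ht.1.le, ht.2]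
  -- the function F y = ∫_0^1 ‖Dv(x+t(y-x))‖ dt
  set F : E → ℝ := fun y => ∫ t, G (t, y) ∂ν with hF_def
  have hFint : Integrable F μB := hGint.integral_prod_right
  have hgldInt : Integrable (fun t => ∫ y, G (t, y) ∂μB) ν := hGint.integral_prod_left
  have hswap : ∫ y, F y ∂μB = ∫ t, (∫ y, G (t, y) ∂μB) ∂ν := by
    rw [hF_def]
    exact (integral_integral_swap (f := fun t y => G (t, y)) hGint).symm
  -- pointwise bound
  have hpt : ∀ y ∈ ball x 1, |v x| ≤ |v y| + F y := by
    intro y hy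
    have h1 := ftc_aux v hv hx hy
    have h2 : ∫ t in (0:ℝ)..1, ‖fderiv ℝ v (x + t • (y - x))‖ = F y := by
      rw [intervalIntegral.integral_of_le zero_le_one, hF_def, hν_def, hG_def]
    rwa [h2] at h1
  -- integrability of |v| on the small ball
  have h_int_vabs : IntegrableOn (fun y => |v y|) (ball x 1) volume := by
    have : IntegrableOn (fun y => |v y|) (closedBall x 1) volume :=
      ((hvc.mono hcb).abs).integrableOn_compact (isCompact_closedBall x 1)
    exact this.mono_set ball_subset_closedBall
  have hc1 : (volume (ball x 1)).toReal = c := by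
    rw [hc_def, Measure.addHaar_ball_center]
  -- main integrated inequality
  have hstep : c * |v x| ≤ (∫ y in ball x 1, |v y|) + ∫ y, F y ∂μB := by
    have h0 : c * |v x| = ∫ _ in ball x 1, |v x| := by
      rw [setIntegral_const, smul_eq_mul]; exact congrArg (· * |v x|) hc1.symm
    rw [h0, hμB_def]
    have h1 : ∫ y in ball x 1, (|v y| + F y) =
        (∫ y in ball x 1, |v y|) + ∫ y in ball x 1, F y := by
      apply integral_add h_int_vabs
      rw [← hμB_def]; exact hFint
    rw [← h1]
    apply setIntegral_mono_on (integrableOn_const measure_ball_lt_top.ne)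
      (h_int_vabs.add (show IntegrableOn F (ball x 1) volume from by rw [IntegrableOn, ← hμB_def]; exact hFint)) measurableSet_ball
    exact hpt
  -- abbreviations for the two global integrals
  set I : ℝ := ∫ y in ball (0 : E) 3, ‖fderiv ℝ v y‖ ^ (2 * m) with hI_def
  set J : ℝ := ∫ y in ball (0 : E) 3, |v y| ^ 2 with hJ_def
  have hI0 : 0 ≤ I := by
    rw [hI_def]
    apply setIntegral_nonneg measurableSet_ball
    intro y _; positivity
  have hJ0 : 0 ≤ J := by
    rw [hJ_def]
    apply setIntegral_nonneg measurableSet_ball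
    intro y _; positivity
  have hcast : ((2 * m : ℕ) : ℝ) = 2 * (m : ℝ) := by push_cast; ring
  -- Term 1 : the L² part
  have hterm1 : (∫ y in ball x 1, |v y|) ≤ J ^ ((1:ℝ)/2) * c ^ ((1:ℝ)/2) := by
    have hv_meas : AEStronglyMeasurable (fun y => |v y|) μB := by
      rw [hμB_def]
      exact ((hvc.mono hB1).abs).aestronglyMeasurable measurableSet_ball
    have hv2' : Integrable (fun y => |v y| ^ (2:ℝ)) μB := by
      have h1 : IntegrableOn (fun y => |v y| ^ 2) (ball x 1) volume := hv2.mono_set hB1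
      rw [hμB_def]
      apply h1.congr_fun ?_ measurableSet_ball
      intro y _
      show |v y| ^ 2 = |v y| ^ (2:ℝ)
      rw [← Real.rpow_natCast |v y| 2]; norm_num
    have hH := holder_aux μB hv_meas (fun z => abs_nonneg _) one_lt_two hv2'
    have e1 : ∫ z, |v z| ∂μB = ∫ y in ball x 1, |v y| := by rw [hμB_def]
    have e2 : ∫ z, |v z| ^ (2:ℝ) ∂μB = ∫ y in ball x 1, |v y| ^ 2 := by
      rw [hμB_def]
      apply setIntegral_congr_fun measurableSet_ball
      intro y _
      show |v y| ^ (2:ℝ) = |v y| ^ 2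
      rw [← Real.rpow_natCast |v y| 2]; norm_num
    have e3 : (μB Set.univ).toReal = c := by
      rw [hμB_def, Measure.restrict_apply_univ, hc1]
    rw [e1, e2, e3] at hH
    have hmono : ∫ y in ball x 1, |v y| ^ 2 ≤ J := by
      rw [hJ_def]
      apply setIntegral_mono_set hv2
      · filter_upwards with y using by positivity
      · exact hB1.eventuallyLE
    calc (∫ y in ball x 1, |v y|)
        ≤ (∫ y in ball x 1, |v y| ^ 2) ^ ((1:ℝ)/2) * c ^ (1 - (1:ℝ)/2) := hH
      _ ≤ J ^ ((1:ℝ)/2) * c ^ ((1:ℝ)/2) := by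
          rw [show (1 - (1:ℝ)/2) = (1:ℝ)/2 by norm_num]
          apply mul_le_mul_of_nonneg_right _ (Real.rpow_nonneg hc.le _)
          apply Real.rpow_le_rpow (setIntegral_nonneg measurableSet_ball
            (fun y _ => by positivity)) hmono (by norm_num)
  -- Term 2 : the gradient part
  set A : ℝ := I ^ ((1:ℝ)/(2*(m:ℝ))) * c ^ θ with hA_def
  have hA0 : 0 ≤ A := mul_nonneg (Real.rpow_nonneg hI0 _) (Real.rpow_nonneg hc.le _)
  have hp1 : (1:ℝ) < ((2*m : ℕ):ℝ) := by rw [hcast]; exact h2m1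
  have hbound : ∀ t ∈ Set.Ioc (0:ℝ) 1,
      (∫ y, G (t, y) ∂μB) ≤ A * t ^ (-(1/2) : ℝ) := by
    intro t ht
    have ht0 : (0:ℝ) < t := ht.1
    have hsc : ∫ y, G (t, y) ∂μB = (t^m)⁻¹ * ∫ z in ball x t, ‖fderiv ℝ v z‖ := by
      rw [hμB_def, hG_def]
      exact scaling_aux (fun z => ‖fderiv ℝ v z‖) x ht0
    have hsub_t : ball x t ⊆ ball (0:E) 3 := (ball_subset_ball ht.2).trans hB1
    haveI : IsFiniteMeasure (volume.restrict (ball x t)) := by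
      constructor; rw [Measure.restrict_apply_univ]; exact measure_ball_lt_top
    have hmeas_t : AEStronglyMeasurable (fun z => ‖fderiv ℝ v z‖)
        (volume.restrict (ball x t)) :=
      (hfc.mono hsub_t).aestronglyMeasurable measurableSet_ball
    have hint_t : Integrable (fun z => ‖fderiv ℝ v z‖ ^ (((2*m : ℕ)):ℝ))
        (volume.restrict (ball x t)) := by
      have h1 : IntegrableOn (fun z => ‖fderiv ℝ v z‖ ^ (2*m)) (ball x t) volume :=
        hDv.mono_set hsub_t
      apply h1.congr_fun ?_ measurableSet_ball
      intro z _
      show ‖fderiv ℝ v z‖ ^ (2*m) = ‖fderiv ℝ v z‖ ^ (((2*m : ℕ)):ℝ)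
      rw [Real.rpow_natCast]
    have hH := holder_aux (volume.restrict (ball x t)) hmeas_t
      (fun z => norm_nonneg _) hp1 hint_t
    have e2 : ∫ z in ball x t, ‖fderiv ℝ v z‖ ^ (((2*m : ℕ)):ℝ) =
        ∫ z in ball x t, ‖fderiv ℝ v z‖ ^ (2*m) := by
      apply setIntegral_congr_fun measurableSet_ball
      intro z _
      show ‖fderiv ℝ v z‖ ^ (((2*m : ℕ)):ℝ) = ‖fderiv ℝ v z‖ ^ (2*m)
      rw [Real.rpow_natCast]
    have e3 : ((volume.restrict (ball x t)) Set.univ).toReal = t^m * c := by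
      rw [Measure.restrict_apply_univ, Measure.addHaar_ball volume x ht0.le,
        ENNReal.toReal_mul, ENNReal.toReal_ofReal (by positivity),
        finrank_euclideanSpace_fin, hc_def]
    rw [e2, e3] at hH
    have hmono2 : ∫ z in ball x t, ‖fderiv ℝ v z‖ ^ (2*m) ≤ I := by
      rw [hI_def]
      apply setIntegral_mono_set hDv
      · filter_upwards with z using by positivity
      · exact hsub_t.eventuallyLE
    have hHI : ∫ z in ball x t, ‖fderiv ℝ v z‖ ≤
        I ^ ((1:ℝ)/(2*(m:ℝ))) * (t^m * c) ^ θ := by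
      refine hH.trans ?_
      rw [hθ_def, show (1:ℝ)/((2*m:ℕ):ℝ) = (1:ℝ)/(2*(m:ℝ)) by rw [hcast]]
      apply mul_le_mul_of_nonneg_right _ (Real.rpow_nonneg (by positivity) _)
      apply Real.rpow_le_rpow (setIntegral_nonneg measurableSet_ball
        (fun z _ => by positivity)) hmono2 (by positivity)
    -- now the rpow algebra
    have halg : (t^m)⁻¹ * (I ^ ((1:ℝ)/(2*(m:ℝ))) * (t^m * c) ^ θ) = A * t ^ (-(1/2) : ℝ) := by
      rw [Real.mul_rpow (by positivity) hc.le, hA_def]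
      have h1 : (t^m : ℝ) = t ^ ((m:ℕ):ℝ) := (Real.rpow_natCast t m).symm
      have h2 : ((t^m : ℝ))⁻¹ * (t^m : ℝ) ^ θ = t ^ (-(1/2) : ℝ) := by
        rw [h1, ← Real.rpow_neg ht0.le, ← Real.rpow_mul ht0.le, ← Real.rpow_add ht0]
        congr 1
        have hmne : (m:ℝ) ≠ 0 := by exact_mod_cast hm0.ne'
        rw [hθ_def]
        field_simp
        ring
      calc (t^m)⁻¹ * (I ^ ((1:ℝ)/(2*(m:ℝ))) * ((t^m:ℝ) ^ θ * c ^ θ))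
          = (I ^ ((1:ℝ)/(2*(m:ℝ))) * c ^ θ) * ((t^m)⁻¹ * (t^m:ℝ) ^ θ) := by ring
        _ = I ^ ((1:ℝ)/(2*(m:ℝ))) * c ^ θ * t ^ (-(1/2) : ℝ) := by rw [h2]
    calc ∫ y, G (t, y) ∂μB = (t^m)⁻¹ * ∫ z in ball x t, ‖fderiv ℝ v z‖ := hsc
      _ ≤ (t^m)⁻¹ * (I ^ ((1:ℝ)/(2*(m:ℝ))) * (t^m * c) ^ θ) := by
          apply mul_le_mul_of_nonneg_left hHI (by positivity)
      _ = A * t ^ (-(1/2) : ℝ) := halg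
  -- integrate the bound over t
  have hrpow_int : IntegrableOn (fun t : ℝ => t ^ (-(1/2):ℝ)) (Set.Ioc (0:ℝ) 1) volume := by
    have h := intervalIntegral.intervalIntegrable_rpow' (a := 0) (b := 1)
      (show (-1:ℝ) < -(1/2) by norm_num)
    rw [intervalIntegrable_iff, Set.uIoc_of_le zero_le_one] at h
    exact h
  have hrpow_val : ∫ t in Set.Ioc (0:ℝ) 1, t ^ (-(1/2):ℝ) = 2 := by
    rw [← intervalIntegral.integral_of_le zero_le_one]
    rw [integral_rpow (Or.inl (by norm_num : (-1:ℝ) < -(1/2)))]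
    norm_num
  have hterm2 : ∫ y, F y ∂μB ≤ 2 * A := by
    rw [hswap, hν_def]
    calc ∫ t in Set.Ioc (0:ℝ) 1, (∫ y, G (t, y) ∂μB)
        ≤ ∫ t in Set.Ioc (0:ℝ) 1, A * t ^ (-(1/2):ℝ) := by
          apply setIntegral_mono_on ?_ (hrpow_int.const_mul A) measurableSet_Ioc hbound
          rw [IntegrableOn, ← hν_def]; exact hgldInt
      _ = A * ∫ t in Set.Ioc (0:ℝ) 1, t ^ (-(1/2):ℝ) := by rw [integral_const_mul]
      _ = 2 * A := by rw [hrpow_val]; ring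
  -- final assembly
  have hfinal : c * |v x| ≤ c ^ ((1:ℝ)/2) * J ^ ((1:ℝ)/2) + 2 * A := by
    calc c * |v x| ≤ (∫ y in ball x 1, |v y|) + ∫ y, F y ∂μB := hstep
      _ ≤ J ^ ((1:ℝ)/2) * c ^ ((1:ℝ)/2) + 2 * A := add_le_add hterm1 hterm2
      _ = c ^ ((1:ℝ)/2) * J ^ ((1:ℝ)/2) + 2 * A := by ring
  have hI' : 0 ≤ I ^ ((1:ℝ)/(2*(m:ℝ))) := Real.rpow_nonneg hI0 _
  have hJ' : 0 ≤ J ^ ((1:ℝ)/2) := Real.rpow_nonneg hJ0 _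
  have hch : 0 ≤ c ^ ((1:ℝ)/2) := Real.rpow_nonneg hc.le _
  have hcθ : 0 ≤ c ^ θ := Real.rpow_nonneg hc.le _
  rw [div_mul_eq_mul_div, le_div_iff₀ hc]
  rw [hA_def] at hfinal
  nlinarith [mul_nonneg hch hI', mul_nonneg hcθ hJ', hfinal]
end

section
/- Let P be a real-valued function that is twice continuously differentiable on an open subset of ℝ² containing the triangle T = {(r, s) ∈ ℝ² : 0 ≤ r ≤ s ≤ 1}, and suppose that the partial derivative ∂P/∂r vanishes at (0, 0). Then P(1, 1) − P(0, 1) = ∫_0^1 ∫_0^s [ (r/s²)·(∂²P/∂r²)(r, s) + (1/s)·(∂²P/∂s∂r)(r, s) ] dr ds, where the iterated integral on the right-hand side converges. -/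
open MeasureTheory

set_option maxHeartbeats 1000000

/-- Equation (8) in the proof of Proposition 5.7: if `P` is twice continuously
differentiable on an open set containing the triangle `{(r,s) : 0 ≤ r ≤ s ≤ 1}` and
`∂P/∂r` vanishes at `(0,0)`, then
`P(1,1) − P(0,1) = ∫₀¹ ∫₀ˢ [(r/s²) ∂²P/∂r² + (1/s) ∂²P/∂s∂r] dr ds`,
and the iterated integral converges. -/
theorem triangle_integral_identity
    (P : ℝ × ℝ → ℝ) (U : Set (ℝ × ℝ)) (hU : IsOpen U)
    (hTU : {p : ℝ × ℝ | 0 ≤ p.1 ∧ p.1 ≤ p.2 ∧ p.2 ≤ 1} ⊆ U)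
    (hP : ContDiffOn ℝ 2 P U)
    (h0 : fderiv ℝ P (0, 0) (1, 0) = 0) :
    (∀ s ∈ Set.Ioc (0 : ℝ) 1, IntervalIntegrable
      (fun r => (r / s ^ 2) *
          iteratedFDeriv ℝ 2 P (r, s) ![((1 : ℝ), (0 : ℝ)), ((1 : ℝ), (0 : ℝ))]
        + (1 / s) *
          iteratedFDeriv ℝ 2 P (r, s) ![((0 : ℝ), (1 : ℝ)), ((1 : ℝ), (0 : ℝ))])
      volume 0 s) ∧
    IntervalIntegrable
      (fun s => ∫ r in (0 : ℝ)..s,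
        ((r / s ^ 2) *
            iteratedFDeriv ℝ 2 P (r, s) ![((1 : ℝ), (0 : ℝ)), ((1 : ℝ), (0 : ℝ))]
          + (1 / s) *
            iteratedFDeriv ℝ 2 P (r, s) ![((0 : ℝ), (1 : ℝ)), ((1 : ℝ), (0 : ℝ))]))
      volume 0 1 ∧
    P (1, 1) - P (0, 1) = ∫ s in (0 : ℝ)..1, ∫ r in (0 : ℝ)..s,
      ((r / s ^ 2) *
          iteratedFDeriv ℝ 2 P (r, s) ![((1 : ℝ), (0 : ℝ)), ((1 : ℝ), (0 : ℝ))]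
        + (1 / s) *
          iteratedFDeriv ℝ 2 P (r, s) ![((0 : ℝ), (1 : ℝ)), ((1 : ℝ), (0 : ℝ))]) := by
  classical
  -- rewrite iterated derivatives as second fderiv
  have hit : ∀ (p : ℝ × ℝ) (v w : ℝ × ℝ),
      iteratedFDeriv ℝ 2 P p ![v, w] = fderiv ℝ (fderiv ℝ P) p v w := by
    intro p v w
    rw [iteratedFDeriv_two_apply]
    simp
  simp only [hit]
  set D2 : ℝ × ℝ → (ℝ × ℝ) →L[ℝ] (ℝ × ℝ) →L[ℝ] ℝ := fderiv ℝ (fderiv ℝ P) with hD2def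
  -- the triangle is compact
  set T : Set (ℝ × ℝ) := {p : ℝ × ℝ | 0 ≤ p.1 ∧ p.1 ≤ p.2 ∧ p.2 ≤ 1} with hTdef
  have hTclosed : IsClosed T := by
    have h1 : IsClosed {p : ℝ × ℝ | 0 ≤ p.1} := isClosed_le continuous_const continuous_fst
    have h2 : IsClosed {p : ℝ × ℝ | p.1 ≤ p.2} := isClosed_le continuous_fst continuous_snd
    have h3 : IsClosed {p : ℝ × ℝ | p.2 ≤ 1} := isClosed_le continuous_snd continuous_const
    have : T = {p : ℝ × ℝ | 0 ≤ p.1} ∩ ({p : ℝ × ℝ | p.1 ≤ p.2} ∩ {p : ℝ × ℝ | p.2 ≤ 1}) := by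
      ext p; simp [hTdef, Set.mem_setOf_eq, and_assoc]
    rw [this]
    exact h1.inter (h2.inter h3)
  have hT : IsCompact T := by
    refine IsCompact.of_isClosed_subset (isCompact_Icc (a := ((0 : ℝ), (0 : ℝ))) (b := (1, 1)))
      hTclosed ?_
    intro p hp
    obtain ⟨h1, h2, h3⟩ := hp
    exact ⟨⟨h1, le_trans h1 h2⟩, ⟨le_trans h2 h3, h3⟩⟩
  obtain ⟨δ, δpos, hδ⟩ := hT.exists_thickening_subset_open hU hTU
  set K : Set (ℝ × ℝ) := Metric.cthickening (δ / 2) T with hKdef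
  have hKU : K ⊆ U :=
    (Metric.cthickening_subset_thickening' δpos (half_lt_self δpos) T).trans hδ
  have hKc : IsCompact K := hT.cthickening
  -- membership in K for the deformed segments
  have hmemK : ∀ u : ℝ, u ∈ Set.Icc (0 : ℝ) 1 → ∀ x : ℝ, -(δ / 2) ≤ x → x ≤ 1 + δ / 2 →
      ((u * x, x) : ℝ × ℝ) ∈ K := by
    intro u hu x hx1 hx2
    set x' : ℝ := max 0 (min x 1) with hx'def
    have hx'0 : 0 ≤ x' := le_max_left _ _
    have hx'1 : x' ≤ 1 := max_le zero_le_one (min_le_right _ _)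
    have hx'T : ((u * x', x') : ℝ × ℝ) ∈ T :=
      ⟨mul_nonneg hu.1 hx'0, mul_le_of_le_one_left hx'0 hu.2, hx'1⟩
    have habs : |x - x'| ≤ δ / 2 := by
      rcases le_total x 0 with h | h
      · have : x' = 0 := by
          rw [hx'def, min_eq_left (le_trans h zero_le_one), max_eq_left h]
        rw [this]
        rw [abs_le]; constructor <;> [linarith; linarith]
      · rcases le_total x 1 with h' | h'
        · have : x' = x := by rw [hx'def, min_eq_left h', max_eq_right h]
          rw [this]; simp; linarith
        · have : x' = 1 := by
            rw [hx'def, min_eq_right h', max_eq_right zero_le_one]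
          rw [this, abs_le]; constructor <;> linarith
    have hdist : dist ((u * x, x) : ℝ × ℝ) ((u * x', x') : ℝ × ℝ) ≤ δ / 2 := by
      rw [Prod.dist_eq]
      refine max_le ?_ ?_
      · simp only [Real.dist_eq]
        have : |u * x - u * x'| = |u| * |x - x'| := by rw [← mul_sub, abs_mul]
        rw [this]
        have hu1 : |u| ≤ 1 := abs_le.2 ⟨le_trans (by linarith) hu.1, hu.2⟩
        calc |u| * |x - x'| ≤ 1 * (δ / 2) :=
              mul_le_mul hu1 habs (abs_nonneg _) zero_le_one
          _ = δ / 2 := one_mul _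
      · simpa [Real.dist_eq] using habs
    exact Metric.mem_cthickening_of_dist_le _ _ _ _ hx'T hdist
  -- regularity facts
  have hfd1 : ContinuousOn (fderiv ℝ P) U :=
    hP.continuousOn_fderiv_of_isOpen hU (by norm_num)
  have hC1 : ContDiffOn ℝ 1 (fderiv ℝ P) U := hP.fderiv_of_isOpen hU (by norm_num)
  have hD2cont : ContinuousOn D2 U := hC1.continuousOn_fderiv_of_isOpen hU le_rfl
  have hD2diff : ∀ q ∈ U, DifferentiableAt ℝ (fderiv ℝ P) q := by
    intro q hq
    exact (hC1.differentiableOn one_ne_zero q hq).differentiableAt (hU.mem_nhds hq)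
  have hPdiff : ∀ q ∈ U, DifferentiableAt ℝ P q := by
    intro q hq
    exact (hP.differentiableOn (by norm_num) q hq).differentiableAt (hU.mem_nhds hq)
  -- bound on the second derivative on K
  obtain ⟨M₀, hM₀⟩ := hKc.exists_bound_of_continuousOn (f := D2) (hD2cont.mono hKU)
  set M : ℝ := max M₀ 0 with hMdef
  have hM : ∀ p ∈ K, ‖D2 p‖ ≤ M := fun p hp => le_trans (hM₀ p hp) (le_max_left _ _)
  have hMnn : 0 ≤ M := le_max_right _ _
  have hnormb : ∀ q ∈ K, ∀ u : ℝ, |u| ≤ 1 →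
      ‖D2 q (u, 1) ((1 : ℝ), (0 : ℝ))‖ ≤ M := by
    intro q hq u hu
    have h1 : ‖((u, 1) : ℝ × ℝ)‖ ≤ 1 := by
      rw [Prod.norm_def]
      exact max_le (by simpa [Real.norm_eq_abs] using hu) (by simp)
    have h2 : ‖(((1 : ℝ), (0 : ℝ)) : ℝ × ℝ)‖ ≤ 1 := by
      rw [Prod.norm_def]; simp
    calc ‖D2 q (u, 1) ((1 : ℝ), (0 : ℝ))‖
        ≤ ‖D2 q‖ * ‖((u, 1) : ℝ × ℝ)‖ * ‖(((1 : ℝ), (0 : ℝ)) : ℝ × ℝ)‖ :=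
          (D2 q).le_opNorm₂ _ _
      _ ≤ M * 1 * 1 := by
          have hMq := hM q hq
          have h4 := norm_nonneg ((u, 1) : ℝ × ℝ)
          have h5 := norm_nonneg ((((1 : ℝ), (0 : ℝ))) : ℝ × ℝ)
          have hin : ‖D2 q‖ * ‖((u, 1) : ℝ × ℝ)‖ ≤ M * 1 := mul_le_mul hMq h1 h4 hMnn
          exact mul_le_mul hin h2 h5 (by positivity)
      _ = M := by ring
  -- derivative of the slice map
  have hFderiv : ∀ u : ℝ, ∀ x : ℝ, ((u * x, x) : ℝ × ℝ) ∈ U →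
      HasDerivAt (fun y : ℝ => fderiv ℝ P (u * y, y) ((1 : ℝ), (0 : ℝ)))
        (D2 (u * x, x) (u, 1) ((1 : ℝ), (0 : ℝ))) x := by
    intro u x hq
    have hγ : HasDerivAt (fun y : ℝ => ((u * y, y) : ℝ × ℝ)) ((u, 1) : ℝ × ℝ) x := by
      have h1 : HasDerivAt (fun y : ℝ => u * y) u x := by
        simpa using (hasDerivAt_id x).const_mul u
      exact h1.prodMk (hasDerivAt_id x)
    have hf := (hD2diff _ hq).hasFDerivAt.clm_apply
      (hasFDerivAt_const (((1 : ℝ), (0 : ℝ)) : ℝ × ℝ) ((u * x, x) : ℝ × ℝ))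
    have h2 := HasFDerivAt.comp_hasDerivAt (f := fun y : ℝ => ((u * y, y) : ℝ × ℝ)) x hf hγ
    simpa [Function.comp_def] using h2
  have hIoc : Set.uIoc (0 : ℝ) 1 = Set.Ioc 0 1 := Set.uIoc_of_le zero_le_one
  -- continuity of slice maps
  have hcurve : ∀ x : ℝ, Continuous (fun u : ℝ => ((u * x, x) : ℝ × ℝ)) :=
    fun x => (continuous_id.mul continuous_const).prodMk continuous_const
  have hsliceCont : ∀ x : ℝ, (∀ u ∈ Set.Icc (0 : ℝ) 1, ((u * x, x) : ℝ × ℝ) ∈ K) →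
      ContinuousOn (fun u : ℝ => fderiv ℝ P (u * x, x) ((1 : ℝ), (0 : ℝ))) (Set.Icc 0 1) := by
    intro x hx
    exact (hfd1.comp (hcurve x).continuousOn fun u hu => hKU (hx u hu)).clm_apply
      continuousOn_const
  have hslice'Cont : ∀ x : ℝ, (∀ u ∈ Set.Icc (0 : ℝ) 1, ((u * x, x) : ℝ × ℝ) ∈ K) →
      ContinuousOn (fun u : ℝ => D2 (u * x, x) (u, 1) ((1 : ℝ), (0 : ℝ))) (Set.Icc 0 1) := by
    intro x hx
    have h1 : ContinuousOn (fun u : ℝ => D2 (u * x, x)) (Set.Icc 0 1) :=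
      hD2cont.comp (hcurve x).continuousOn fun u hu => hKU (hx u hu)
    exact (h1.clm_apply (continuous_id.prodMk continuous_const).continuousOn).clm_apply
      continuousOn_const
  have hballK : ∀ s₀ ∈ Set.Icc (0 : ℝ) 1, ∀ x ∈ Metric.ball s₀ (δ / 4),
      ∀ u ∈ Set.Icc (0 : ℝ) 1, ((u * x, x) : ℝ × ℝ) ∈ K := by
    intro s₀ hs₀ x hx u hu
    rw [Metric.mem_ball, Real.dist_eq] at hx
    have h := abs_lt.1 hx
    exact hmemK u hu x (by linarith [hs₀.1]) (by linarith [hs₀.2])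
  -- the key differentiation under the integral sign
  have key : ∀ s₀ ∈ Set.Icc (0 : ℝ) 1,
      IntervalIntegrable (fun u => D2 (u * s₀, s₀) (u, 1) ((1 : ℝ), (0 : ℝ))) volume 0 1 ∧
      HasDerivAt (fun x : ℝ => ∫ u in (0 : ℝ)..1, fderiv ℝ P (u * x, x) ((1 : ℝ), (0 : ℝ)))
        (∫ u in (0 : ℝ)..1, D2 (u * s₀, s₀) (u, 1) ((1 : ℝ), (0 : ℝ))) s₀ := by
    intro s₀ hs₀
    have hε : (0 : ℝ) < δ / 4 := by linarith
    refine intervalIntegral.hasDerivAt_integral_of_dominated_loc_of_deriv_le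
      (F := fun x u => fderiv ℝ P (u * x, x) ((1 : ℝ), (0 : ℝ)))
      (F' := fun x u => D2 (u * x, x) (u, 1) ((1 : ℝ), (0 : ℝ)))
      (bound := fun _ => M) (Metric.ball_mem_nhds s₀ hε) ?_ ?_ ?_ ?_ ?_ ?_
    · filter_upwards [Metric.ball_mem_nhds s₀ hε] with x hx
      rw [hIoc]
      exact ((hsliceCont x (hballK s₀ hs₀ x hx)).mono Set.Ioc_subset_Icc_self).aestronglyMeasurable
        measurableSet_Ioc
    · apply ContinuousOn.intervalIntegrable
      have := hsliceCont s₀ (hballK s₀ hs₀ s₀ (Metric.mem_ball_self hε))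
      rwa [Set.uIcc_of_le zero_le_one]
    · rw [hIoc]
      exact ((hslice'Cont s₀ (hballK s₀ hs₀ s₀
        (Metric.mem_ball_self hε))).mono Set.Ioc_subset_Icc_self).aestronglyMeasurable
        measurableSet_Ioc
    · refine Filter.Eventually.of_forall ?_
      intro t ht x hx
      rw [hIoc] at ht
      exact hnormb _ (hballK s₀ hs₀ x hx t ⟨ht.1.le, ht.2⟩) t
        (abs_le.2 ⟨by linarith [ht.1], ht.2⟩)
    · exact intervalIntegrable_const
    · refine Filter.Eventually.of_forall ?_
      intro t ht x hx
      rw [hIoc] at ht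
      exact hFderiv t x (hKU (hballK s₀ hs₀ x hx t ⟨ht.1.le, ht.2⟩))
  -- bound on the derivative
  have hφbound : ∀ s ∈ Set.Ioc (0 : ℝ) 1,
      ‖∫ u in (0 : ℝ)..1, D2 (u * s, s) (u, 1) ((1 : ℝ), (0 : ℝ))‖ ≤ M := by
    intro s hs
    calc ‖∫ u in (0 : ℝ)..1, D2 (u * s, s) (u, 1) ((1 : ℝ), (0 : ℝ))‖
        ≤ M * |1 - 0| := by
          apply intervalIntegral.norm_integral_le_of_norm_le_const
          intro u hu
          rw [hIoc] at hu
          exact hnormb _ (hmemK u ⟨hu.1.le, hu.2⟩ s (by linarith [hs.1]) (by linarith [hs.2]))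
            u (abs_le.2 ⟨by linarith [hu.1], hu.2⟩)
      _ = M := by simp
  -- integrability of the derivative
  have hintD : IntervalIntegrable
      (fun s => ∫ u in (0 : ℝ)..1, D2 (u * s, s) (u, 1) ((1 : ℝ), (0 : ℝ))) volume 0 1 := by
    rw [intervalIntegrable_iff_integrableOn_Ioc_of_le zero_le_one]
    have hi : IntegrableOn
        (deriv (fun x : ℝ => ∫ u in (0 : ℝ)..1, fderiv ℝ P (u * x, x) ((1 : ℝ), (0 : ℝ))))
        (Set.Ioc 0 1) volume := by
      apply Integrable.mono' (integrable_const M) ((measurable_deriv _).aestronglyMeasurable)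
      refine (ae_restrict_iff' measurableSet_Ioc).2 (Filter.Eventually.of_forall ?_)
      intro s hs
      rw [((key s ⟨hs.1.le, hs.2⟩).2).deriv]
      exact hφbound s hs
    apply hi.congr
    refine (ae_restrict_iff' measurableSet_Ioc).2 (Filter.Eventually.of_forall ?_)
    intro s hs
    exact ((key s ⟨hs.1.le, hs.2⟩).2).deriv
  -- fundamental theorem of calculus for the outer integral
  have hFTC : (∫ s in (0 : ℝ)..1, ∫ u in (0 : ℝ)..1, D2 (u * s, s) (u, 1) ((1 : ℝ), (0 : ℝ)))
      = (∫ u in (0 : ℝ)..1, fderiv ℝ P (u * 1, 1) ((1 : ℝ), (0 : ℝ)))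
        - (∫ u in (0 : ℝ)..1, fderiv ℝ P (u * 0, 0) ((1 : ℝ), (0 : ℝ))) := by
    refine intervalIntegral.integral_eq_sub_of_hasDerivAt
      (f := fun x : ℝ => ∫ u in (0 : ℝ)..1, fderiv ℝ P (u * x, x) ((1 : ℝ), (0 : ℝ))) ?_ ?_
    · intro s hs
      rw [Set.uIcc_of_le zero_le_one] at hs
      exact (key s hs).2
    · exact hintD
  have hφ0 : (∫ u in (0 : ℝ)..1, fderiv ℝ P (u * 0, 0) ((1 : ℝ), (0 : ℝ))) = 0 := by
    simp only [mul_zero, intervalIntegral.integral_const, smul_eq_mul]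
    have h0' : (fderiv ℝ P (0, 0)) (1, 0) = (0 : ℝ) := h0
    rw [h0', mul_zero]
  have hφ1 : (∫ u in (0 : ℝ)..1, fderiv ℝ P (u * 1, 1) ((1 : ℝ), (0 : ℝ)))
      = P (1, 1) - P (0, 1) := by
    have h1 : ∀ u ∈ Set.uIcc (0 : ℝ) 1,
        HasDerivAt (fun y : ℝ => P (y, 1)) (fderiv ℝ P (u, 1) ((1 : ℝ), (0 : ℝ))) u := by
      intro u hu
      rw [Set.uIcc_of_le zero_le_one] at hu
      have hq : ((u, 1) : ℝ × ℝ) ∈ U := hTU ⟨hu.1, hu.2, le_refl 1⟩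
      have hγ : HasDerivAt (fun y : ℝ => ((y, 1) : ℝ × ℝ)) (((1 : ℝ), (0 : ℝ)) : ℝ × ℝ) u :=
        (hasDerivAt_id u).prodMk (hasDerivAt_const u 1)
      have := HasFDerivAt.comp_hasDerivAt (f := fun y : ℝ => ((y, 1) : ℝ × ℝ)) u
        (hPdiff _ hq).hasFDerivAt hγ
      simpa [Function.comp_def] using this
    have h2 : IntervalIntegrable (fun u => fderiv ℝ P (u, 1) ((1 : ℝ), (0 : ℝ))) volume 0 1 := by
      apply ContinuousOn.intervalIntegrable
      rw [Set.uIcc_of_le zero_le_one]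
      have hc : ContinuousOn (fun u : ℝ => fderiv ℝ P (u, 1)) (Set.Icc 0 1) :=
        hfd1.comp (continuous_id.prodMk continuous_const).continuousOn
          fun u hu => hTU ⟨hu.1, hu.2, le_refl 1⟩
      exact hc.clm_apply continuousOn_const
    have h3 := intervalIntegral.integral_eq_sub_of_hasDerivAt h1 h2
    simp only [mul_one]
    exact h3
  -- the inner integral identity via the substitution r = u * s
  have inner_eq : ∀ s ∈ Set.Ioc (0 : ℝ) 1,
      (∫ r in (0 : ℝ)..s, ((r / s ^ 2) * D2 (r, s) ((1 : ℝ), (0 : ℝ)) ((1 : ℝ), (0 : ℝ))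
        + (1 / s) * D2 (r, s) ((0 : ℝ), (1 : ℝ)) ((1 : ℝ), (0 : ℝ))))
      = ∫ u in (0 : ℝ)..1, D2 (u * s, s) (u, 1) ((1 : ℝ), (0 : ℝ)) := by
    intro s hs
    have hs0 : s ≠ 0 := ne_of_gt hs.1
    set g : ℝ → ℝ := fun r => (r / s ^ 2) * D2 (r, s) ((1 : ℝ), (0 : ℝ)) ((1 : ℝ), (0 : ℝ))
      + (1 / s) * D2 (r, s) ((0 : ℝ), (1 : ℝ)) ((1 : ℝ), (0 : ℝ)) with hg
    have h1 := intervalIntegral.integral_comp_mul_right g hs0 (a := 0) (b := 1)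
    rw [zero_mul, one_mul] at h1
    have h2 : (∫ r in (0 : ℝ)..s, g r) = s * ∫ u in (0 : ℝ)..1, g (u * s) := by
      rw [h1, smul_eq_mul, ← mul_assoc, mul_inv_cancel₀ hs0, one_mul]
    rw [h2, ← intervalIntegral.integral_const_mul]
    apply intervalIntegral.integral_congr
    intro u _
    have hexp : ((u, 1) : ℝ × ℝ)
        = u • ((((1 : ℝ), (0 : ℝ))) : ℝ × ℝ) + ((((0 : ℝ), (1 : ℝ))) : ℝ × ℝ) := by
      simp [Prod.ext_iff]
    have hlin : D2 (u * s, s) (u, 1) ((1 : ℝ), (0 : ℝ))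
        = u * D2 (u * s, s) ((1 : ℝ), (0 : ℝ)) ((1 : ℝ), (0 : ℝ))
          + D2 (u * s, s) ((0 : ℝ), (1 : ℝ)) ((1 : ℝ), (0 : ℝ)) := by
      rw [hexp, map_add, _root_.map_smul, ContinuousLinearMap.add_apply,
        ContinuousLinearMap.smul_apply, smul_eq_mul]
    show s * g (u * s) = D2 (u * s, s) (u, 1) ((1 : ℝ), (0 : ℝ))
    rw [hlin]
    simp only [hg]
    field_simp
  refine ⟨?_, ?_, ?_⟩
  · intro s hs
    apply ContinuousOn.intervalIntegrable
    rw [Set.uIcc_of_le hs.1.le]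
    have hc1 : ContinuousOn (fun r : ℝ => D2 (r, s)) (Set.Icc 0 s) :=
      hD2cont.comp (continuous_id.prodMk continuous_const).continuousOn
        fun r hr => hTU ⟨hr.1, hr.2, hs.2⟩
    have hA : ContinuousOn (fun r : ℝ => D2 (r, s) ((1 : ℝ), (0 : ℝ)) ((1 : ℝ), (0 : ℝ)))
        (Set.Icc 0 s) := (hc1.clm_apply continuousOn_const).clm_apply continuousOn_const
    have hB : ContinuousOn (fun r : ℝ => D2 (r, s) ((0 : ℝ), (1 : ℝ)) ((1 : ℝ), (0 : ℝ)))
        (Set.Icc 0 s) := (hc1.clm_apply continuousOn_const).clm_apply continuousOn_const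
    exact (((continuous_id.div_const _).continuousOn).mul hA).add (continuousOn_const.mul hB)
  · rw [intervalIntegrable_iff_integrableOn_Ioc_of_le zero_le_one]
    rw [intervalIntegrable_iff_integrableOn_Ioc_of_le zero_le_one] at hintD
    apply hintD.congr
    refine (ae_restrict_iff' measurableSet_Ioc).2 (Filter.Eventually.of_forall ?_)
    intro s hs
    exact (inner_eq s hs).symm
  · have hcongr : (∫ s in (0 : ℝ)..1, ∫ r in (0 : ℝ)..s,
        ((r / s ^ 2) * D2 (r, s) ((1 : ℝ), (0 : ℝ)) ((1 : ℝ), (0 : ℝ))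
          + (1 / s) * D2 (r, s) ((0 : ℝ), (1 : ℝ)) ((1 : ℝ), (0 : ℝ))))
        = ∫ s in (0 : ℝ)..1, ∫ u in (0 : ℝ)..1, D2 (u * s, s) (u, 1) ((1 : ℝ), (0 : ℝ)) := by
      apply intervalIntegral.integral_congr_ae
      refine Filter.Eventually.of_forall ?_
      intro s hs
      rw [hIoc] at hs
      exact inner_eq s hs
    rw [hcongr, hFTC, hφ0, hφ1, sub_zero]
end
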